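/- Let M be a von Neumann algebra, λ a σ-weakly continuous linear functional on M with polar decomposition λ = ψv. Then for every a ∈ M one has ‖aλ‖ ≤ ψ(a*a)^{1/2} · ‖λ‖^{1/2}, where (aλ)(x) := λ(xa). -/

import Mathlib

/-!
The sesquilinear form `(x, y) ↦ ψ (x⋆ y)` is positive semidefinite, so Cauchy–Schwarz gives
`|λ(x a)| = |ψ((x⋆ v⋆)⋆ a)| ≤ ψ(v x x⋆ v⋆)^{1/2} ψ(a⋆ a)^{1/2}`, and
`ψ(v x x⋆ v⋆) ≤ ‖ψ‖ ‖v x‖² ≤ ‖λ‖ ‖x‖²` because a partial isometry has norm at most one.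
-/

open ComplexConjugate

theorem IsStarProjection.mul_star_of_mul_star_mul_eq_self {R : Type*} [Semigroup R] [StarMul R]
    {v : R} (hv : v * star v * v = v) : IsStarProjection (v * star v) where
  isIdempotentElem := by rw [IsIdempotentElem, ← mul_assoc, hv]
  isSelfAdjoint := by simp [IsSelfAdjoint, star_mul]

theorem norm_le_one_of_mul_star_mul_eq_self {E : Type*} [NonUnitalNormedRing E] [StarRing E]
    [CStarRing E] {v : E} (hv : v * star v * v = v) : ‖v‖ ≤ 1 := by
  have h : ‖v‖ * ‖v‖ ≤ 1 := by
    rw [← CStarRing.norm_self_mul_star]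
    exact (IsStarProjection.mul_star_of_mul_star_mul_eq_self hv).norm_le
  nlinarith [norm_nonneg v]

section StarMulForm

variable {M : Type*} [Ring M] [StarRing M] [Algebra ℂ M] [StarModule ℂ M] (ψ : M →ₗ[ℂ] ℂ)

/-- Polarization: the imaginary parts of `ψ ((x + y)⋆ (x + y))` and `ψ ((x + i y)⋆ (x + i y))`
vanish. -/
theorem conj_apply_star_mul_of_im_eq_zero (hreal : ∀ x : M, (ψ (star x * x)).im = 0) (x y : M) :
    conj (ψ (star y * x)) = ψ (star x * y) := by
  have hsum := hreal (x + y)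
  have hsumI := hreal (x + Complex.I • y)
  simp only [star_add, star_smul, Complex.star_def, Complex.conj_I, add_mul, mul_add,
    smul_mul_assoc, mul_smul_comm, map_add, map_smul, smul_eq_mul, Complex.add_im,
    hreal x, hreal y, Complex.mul_im, Complex.mul_re, Complex.I_re, Complex.I_im, Complex.neg_re,
    Complex.neg_im] at hsum hsumI
  apply Complex.ext <;> simp <;> linarith

abbrev starMulPreInnerCore (hpos : ∀ x : M, 0 ≤ (ψ (star x * x)).re)
    (hreal : ∀ x : M, (ψ (star x * x)).im = 0) : PreInnerProductSpace.Core ℂ M where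
  inner x y := ψ (star x * y)
  conj_inner_symm x y := conj_apply_star_mul_of_im_eq_zero ψ hreal x y
  re_inner_nonneg := hpos
  add_left x y z := by simp only [star_add, add_mul, map_add]
  smul_left x y r := by simp [star_smul]

theorem norm_apply_star_mul_le (hpos : ∀ x : M, 0 ≤ (ψ (star x * x)).re)
    (hreal : ∀ x : M, (ψ (star x * x)).im = 0) (x y : M) :
    ‖ψ (star x * y)‖ ≤ √(ψ (star x * x)).re * √(ψ (star y * y)).re := by
  have hcs :=
    InnerProductSpace.Core.inner_mul_inner_self_le (c := starMulPreInnerCore ψ hpos hreal) x y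
  change ‖ψ (star x * y)‖ * ‖ψ (star y * x)‖ ≤ (ψ (star x * x)).re * (ψ (star y * y)).re at hcs
  rw [← Complex.norm_conj (ψ (star y * x)), conj_apply_star_mul_of_im_eq_zero ψ hreal] at hcs
  rw [← Real.sqrt_mul (hpos x)]
  exact Real.le_sqrt_of_sq_le (by rw [sq]; exact hcs)

end StarMulForm

theorem re_apply_mul_star_le {M : Type*} [NonUnitalNormedRing M] [StarRing M] [CStarRing M]
    [NormedSpace ℂ M] (ψ : M →L[ℂ] ℂ) (y : M) : (ψ (y * star y)).re ≤ ‖ψ‖ * ‖y‖ ^ 2 :=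
  calc (ψ (y * star y)).re ≤ ‖ψ (y * star y)‖ := Complex.re_le_norm _
    _ ≤ ‖ψ‖ * ‖y * star y‖ := ψ.le_opNorm _
    _ = ‖ψ‖ * ‖y‖ ^ 2 := by rw [CStarRing.norm_self_mul_star, sq]

theorem norm_apply_mul_le {M : Type*} [NormedRing M] [StarRing M] [CStarRing M]
    [NormedAlgebra ℂ M] [StarModule ℂ M] (ψ : M →L[ℂ] ℂ)
    (hpos : ∀ x : M, 0 ≤ (ψ (star x * x)).re) (hreal : ∀ x : M, (ψ (star x * x)).im = 0)
    (y a : M) : ‖ψ (y * a)‖ ≤ √(ψ (star a * a)).re * √‖ψ‖ * ‖y‖ :=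
  calc ‖ψ (y * a)‖ = ‖ψ (star (star y) * a)‖ := by rw [star_star]
    _ ≤ √(ψ (star (star y) * star y)).re * √(ψ (star a * a)).re :=
      norm_apply_star_mul_le ψ.toLinearMap hpos hreal _ _
    _ ≤ √(‖ψ‖ * ‖y‖ ^ 2) * √(ψ (star a * a)).re := by
      gcongr
      rw [star_star]
      exact re_apply_mul_star_le ψ y
    _ = √(ψ (star a * a)).re * √‖ψ‖ * ‖y‖ := by
      rw [Real.sqrt_mul (norm_nonneg ψ), Real.sqrt_sq (norm_nonneg y)]
      ring

theorem stmt_1_general {M : Type*} [NormedRing M] [StarRing M] [CStarRing M]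
    [NormedAlgebra ℂ M] [StarModule ℂ M]
    (lam ψ : M →L[ℂ] ℂ) (v : M)
    (hpos : ∀ x : M, 0 ≤ (ψ (star x * x)).re)
    (hreal : ∀ x : M, (ψ (star x * x)).im = 0)
    (hpolar : ∀ x : M, lam x = ψ (v * x))
    (hpartial : v * star v * v = v)
    (hnorm : ‖ψ‖ = ‖lam‖) (a : M) :
    ‖lam.comp ((ContinuousLinearMap.mul ℂ M).flip a)‖ ≤
      Real.sqrt ((ψ (star a * a)).re) * Real.sqrt ‖lam‖ := by
  refine ContinuousLinearMap.opNorm_le_bound _ (by positivity) fun x => ?_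
  calc ‖lam (x * a)‖ = ‖ψ ((v * x) * a)‖ := by rw [hpolar, mul_assoc]
    _ ≤ √(ψ (star a * a)).re * √‖ψ‖ * ‖v * x‖ := norm_apply_mul_le ψ hpos hreal _ _
    _ ≤ √(ψ (star a * a)).re * √‖lam‖ * ‖x‖ := by
      rw [hnorm]
      gcongr
      exact (norm_mul_le _ _).trans
        (mul_le_of_le_one_left (norm_nonneg x) (norm_le_one_of_mul_star_mul_eq_self hpartial))

/-- Lemma 2.1 (second inequality): if `λ = ψ v` is the polar decomposition, then
`‖a λ‖ ≤ ψ(a* a)^{1/2} ‖λ‖^{1/2}`, where `(aλ)(x) = λ(x a)`. -/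
theorem stmt_1 {M : Type*} [NormedRing M] [StarRing M] [CStarRing M]
    [NormedAlgebra ℂ M] [CompleteSpace M] [StarModule ℂ M]
    (lam ψ : M →L[ℂ] ℂ) (v : M)
    (hpos : ∀ x : M, 0 ≤ (ψ (star x * x)).re)
    (hreal : ∀ x : M, (ψ (star x * x)).im = 0)
    (hpolar : ∀ x : M, lam x = ψ (v * x))
    (hpartial : v * star v * v = v)
    (hnorm : ‖ψ‖ = ‖lam‖) (a : M) :
    ‖lam.comp ((ContinuousLinearMap.mul ℂ M).flip a)‖ ≤
      Real.sqrt ((ψ (star a * a)).re) * Real.sqrt ‖lam‖ :=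
  stmt_1_general lam ψ v hpos hreal hpolar hpartial hnorm a
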